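/- Suppose w[i..j] is a maximal abelian power of period P (norm p): w[i..j] is a concatenation of at least two blocks of length p, all with Parikh vector P, and it satisfies (i < p or P_{w[i-p..i-1]} ≠ P) and (j + p ≥ |w| or P_{w[j+1..j+p]} ≠ P). Then there is a unique anchored run with period P whose core sequence is exactly w[i..j]; conversely, trimming the head and tail of any anchored run with period P yields a maximal abelian power of period P. This correspondence is a bijection. -/

import Mathlib

open scoped BigOperators

variable {α : Type*} [DecidableEq α] [Fintype α]

/-- Parikh vector of a word: counts of each letter. -/
def parikh (w : List α) (a : α) : ℕ := w.count a

/-- Componentwise containment of Parikh vectors. -/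
def PSub (P Q : α → ℕ) : Prop := ∀ a, P a ≤ Q a

/-- Strict containment of Parikh vectors. -/
def PSSub (P Q : α → ℕ) : Prop := PSub P Q ∧ P ≠ Q

/-- Norm of a Parikh vector: sum of its components. -/
def pnorm (P : α → ℕ) : ℕ := ∑ a, P a

/-- Fragment w[i..j] (both endpoints included). -/
def frag (w : List α) (i j : ℕ) : List α := (w.drop i).take (j + 1 - i)

/-- `IsPF P w k u` : w = u 0 ++ u 1 ++ ⋯ ++ u k is a periodic factorization of w
with respect to P: the cores u 1, …, u (k-1) have Parikh vector P and the head u 0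
and tail u k have Parikh vector strictly contained in P. -/
def IsPF (P : α → ℕ) (w : List α) (k : ℕ) (u : ℕ → List α) : Prop :=
  1 ≤ k ∧ w = ((List.range (k + 1)).map u).flatten ∧
  (∀ i, 0 < i → i < k → parikh (u i) = P) ∧
  PSSub (parikh (u 0)) P ∧ PSSub (parikh (u k)) P

/-- Fragment w[i..j] has abelian period P. -/
def HasPeriod (P : α → ℕ) (w : List α) (i j : ℕ) : Prop :=
  ∃ m u, IsPF P (frag w i j) m u

/-- Fragment w[i..j] has abelian period P anchored at k : there is a periodic
factorization whose cores start (within w) at positions ≡ k (mod |P|). -/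
def HasAnchPeriod (P : α → ℕ) (w : List α) (i j k : ℕ) : Prop :=
  ∃ m u, IsPF P (frag w i j) m u ∧ (i + (u 0).length) % pnorm P = k % pnorm P

/-- Fragment w[i..j] is periodic with period P anchored at k
(factorization with at least two cores). -/
def PeriodicAnch (P : α → ℕ) (w : List α) (i j k : ℕ) : Prop :=
  ∃ m u, 3 ≤ m ∧ IsPF P (frag w i j) m u ∧
    (i + (u 0).length) % pnorm P = k % pnorm P

/-- Fragment w[i..j] is periodic with period P (at least two cores, any anchor). -/
def APeriodic (P : α → ℕ) (w : List α) (i j : ℕ) : Prop :=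
  ∃ m u, 3 ≤ m ∧ IsPF P (frag w i j) m u

/-- k-anchored abelian run with period P. -/
def AnchoredRun (P : α → ℕ) (w : List α) (i j k : ℕ) : Prop :=
  i ≤ j ∧ j < w.length ∧ PeriodicAnch P w i j k ∧
  (i = 0 ∨ ¬ PeriodicAnch P w (i - 1) j k) ∧
  (j + 1 = w.length ∨ ¬ PeriodicAnch P w i (j + 1) k)

/-- Abelian run with period P. -/
def AbelianRun (P : α → ℕ) (w : List α) (i j : ℕ) : Prop :=
  i ≤ j ∧ j < w.length ∧ APeriodic P w i j ∧
  (i = 0 ∨ ¬ APeriodic P w (i - 1) j) ∧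
  (j + 1 = w.length ∨ ¬ APeriodic P w i (j + 1))

/-- B_i[k]: the starting position of the longest suffix of w[0..i] having abelian
period P anchored at k (⊤ = ∞ if no such suffix exists). -/
noncomputable def Bfun (P : α → ℕ) (w : List α) (i k : ℕ) : ℕ∞ :=
  sInf {b : ℕ∞ | ∃ s : ℕ, b = (s : ℕ∞) ∧ s ≤ i + 1 ∧ HasAnchPeriod P w s i k}

/-- w[i..j] is a maximal abelian power of period P: a concatenation of at least
two blocks of length p = |P|, each with Parikh vector P, which cannot be
extended by a full block on either side. -/
def MaxPower (P : α → ℕ) (w : List α) (i j : ℕ) : Prop :=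
  j < w.length ∧
  (∃ m, 2 ≤ m ∧ j + 1 = i + m * pnorm P) ∧
  (∀ l, i + (l + 1) * pnorm P ≤ j + 1 →
    parikh (frag w (i + l * pnorm P) (i + (l + 1) * pnorm P - 1)) = P) ∧
  (i < pnorm P ∨ parikh (frag w (i - pnorm P) (i - 1)) ≠ P) ∧
  (w.length ≤ j + pnorm P ∨ parikh (frag w (j + 1) (j + pnorm P)) ≠ P)

/-!
A periodic factorization of `w[i..j]` anchored at `k` amounts to a position `s ≡ k (mod p)` and
`c ≥ 2` consecutive blocks with Parikh vector `P` from `s` on, preceded by a head and followed by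
a tail whose Parikh vectors are strictly contained in `P`. Head and tail are then shorter than `p`,
so `s` is the only position `≡ k` in `[i, i + p)`, and the cores end at the only position `≡ k`
in `(j + 1 - p, j + 1]`.

The cores of an anchored run form a maximal power: a full block next to them could be absorbed
by extending the run by one letter, either into its head (tail) or, when that letter completes
the block, as a new core. Conversely, a maximal power extends to the run obtained by adding the
longest admissible head and tail; maximality of the power forbids any fragment with the same
anchor around it to have other cores, which makes this run unique.
-/

namespace List

variable {β : Type*} (l : List β)

theorem length_extract (x y : ℕ) : (l.extract x y).length = min y l.length - x := by
  simp only [extract_eq_take_drop, length_take, length_drop]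
  omega

theorem extract_append_extract {x y z : ℕ} (hxy : x ≤ y) (hyz : y ≤ z) :
    l.extract x y ++ l.extract y z = l.extract x z := by
  simp only [extract_eq_take_drop]
  rw [show z - x = (y - x) + (z - y) by omega, take_add, drop_drop, Nat.add_sub_cancel' hxy]

theorem extract_infix_extract {x y x' y' : ℕ} (hx : x' ≤ x) (hy : y ≤ y') :
    l.extract x y <:+: l.extract x' y' := by
  rcases le_or_gt y x with hyx | hxy
  · simp [extract_eq_take_drop, Nat.sub_eq_zero_of_le hyx]
  · refine ⟨l.extract x' x, l.extract y y', ?_⟩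
    rw [extract_append_extract l hx hxy.le, extract_append_extract l (hx.trans hxy.le) hy]

theorem extract_extract {i j x y : ℕ} (h : i + y ≤ j) :
    (l.extract i j).extract x y = l.extract (i + x) (i + y) := by
  simp only [extract_eq_take_drop, drop_take, take_take, drop_drop]
  congr 1
  omega

theorem eq_extract_of_extract_eq_append {x z : ℕ} {a b : List β} (hxz : x ≤ z)
    (hz : z ≤ l.length) (h : l.extract x z = a ++ b) :
    a = l.extract x (x + a.length) ∧ b = l.extract (x + a.length) z := by
  have hlen := congrArg length h
  rw [length_extract, length_append] at hlen
  rw [← extract_append_extract l (Nat.le_add_right x a.length) (by omega)] at h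
  exact append_inj h.symm (by rw [length_extract]; omega)

theorem flatten_map_range_add_two (u : ℕ → List β) (c : ℕ) :
    ((range (c + 2)).map u).flatten =
      u 0 ++ ((range c).map fun k => u (k + 1)).flatten ++ u (c + 1) := by
  rw [range_succ, range_succ_eq_map]
  simp [Function.comp_def]

theorem length_flatten_map_range {f : ℕ → List β} {c n : ℕ}
    (hf : ∀ k < c, (f k).length = n) :
    ((range c).map f).flatten.length = c * n := by
  induction c with
  | zero => simp
  | succ c ih =>
    rw [range_succ, map_append, flatten_append, length_append, ih fun k hk => hf k (by omega)]
    simp [hf c (by omega), Nat.succ_mul]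

theorem extract_flatten_map_range {f : ℕ → List β} {c n k : ℕ}
    (hf : ∀ k < c, (f k).length = n) (hk : k < c) :
    ((range c).map f).flatten.extract (k * n) (k * n + n) = f k := by
  induction c with
  | zero => omega
  | succ c ih =>
    have hf' : ∀ k < c, (f k).length = n := fun k hk => hf k (by omega)
    have hlen := length_flatten_map_range hf'
    rw [range_succ, map_append, flatten_append, map_singleton, flatten_singleton]
    rcases Nat.lt_succ_iff_lt_or_eq.mp hk with hk | rfl
    · have hkn : k * n + n ≤ c * n := by
        rw [← Nat.succ_mul]; exact Nat.mul_le_mul_right n hk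
      rw [← ih hf' hk, extract_eq_take_drop, extract_eq_take_drop,
        drop_append_of_le_length (by omega), take_append_of_le_length]
      simp only [length_drop]; omega
    · rw [extract_eq_take_drop, drop_left' hlen, Nat.add_sub_cancel_left,
        take_of_length_le (hf k (by omega)).le]

theorem flatten_map_range_extract (s n c : ℕ) :
    ((range c).map fun k => l.extract (s + k * n) (s + k * n + n)).flatten =
      l.extract s (s + c * n) := by
  induction c with
  | zero => simp [extract_eq_take_drop]
  | succ c ih =>
    rw [range_succ, map_append, flatten_append, ih, map_singleton, flatten_singleton,
      Nat.succ_mul, ← Nat.add_assoc, extract_append_extract l (by omega) (by omega)]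

end List

theorem Nat.eq_of_mod_eq_of_lt_add {p a b : ℕ} (h : a % p = b % p) (hab : a < b + p)
    (hba : b < a + p) : a = b :=
  Nat.ModEq.eq_of_abs_lt h (abs_sub_lt_iff.2 ⟨by omega, by omega⟩)

section Parikh

variable {P : α → ℕ} {u v : List α}

theorem pnorm_parikh (v : List α) : pnorm (parikh v) = v.length := by
  induction v with
  | nil => simp [pnorm, parikh]
  | cons a v ih =>
    simp only [pnorm, parikh, List.count_cons, Finset.sum_add_distrib] at ih ⊢
    simp [ih]

theorem pssub_parikh_iff : PSSub (parikh v) P ↔ PSub (parikh v) P ∧ v.length < pnorm P := by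
  refine ⟨fun ⟨hle, hne⟩ => ⟨hle, ?_⟩, fun ⟨hle, hlt⟩ => ⟨hle, ?_⟩⟩
  · obtain ⟨a, ha⟩ := Function.ne_iff.mp hne
    rw [← pnorm_parikh]
    exact Finset.sum_lt_sum (fun a _ => hle a) ⟨a, Finset.mem_univ a, (hle a).lt_of_ne ha⟩
  · rintro rfl
    rw [pnorm_parikh] at hlt
    exact hlt.false

theorem pssub_parikh_of_infix (h : u <:+: v) (hv : PSSub (parikh v) P) : PSSub (parikh u) P := by
  rw [pssub_parikh_iff] at hv ⊢
  exact ⟨fun a => (h.count_le a).trans (hv.1 a), h.length_le.trans_lt hv.2⟩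

theorem pssub_parikh_of_infix_of_parikh_eq (h : u <:+: v) (hv : parikh v = P)
    (hu : u.length < pnorm P) : PSSub (parikh u) P :=
  pssub_parikh_iff.2 ⟨fun a => hv ▸ h.count_le a, hu⟩

theorem not_pssub_parikh_of_infix_of_parikh_eq (h : u <:+: v) (hu : parikh u = P) :
    ¬ PSSub (parikh v) P := fun hv => by
  have := (pssub_parikh_iff.1 (pssub_parikh_of_infix h hv)).2
  rw [← hu, pnorm_parikh] at this
  exact this.false

theorem pssub_parikh_nil (hP : 0 < pnorm P) : PSSub (parikh ([] : List α)) P :=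
  pssub_parikh_iff.2 ⟨fun _ => Nat.zero_le _, hP⟩

end Parikh

def IsPowerAt (P : α → ℕ) (w : List α) (s c : ℕ) : Prop :=
  ∀ l < c, parikh (w.extract (s + l * pnorm P) (s + l * pnorm P + pnorm P)) = P

namespace IsPowerAt

variable {P : α → ℕ} {w : List α} {s c : ℕ}

theorem cons (h : IsPowerAt P w s c) (hs : pnorm P ≤ s)
    (hblock : parikh (w.extract (s - pnorm P) s) = P) :
    IsPowerAt P w (s - pnorm P) (c + 1) := by
  rintro (_ | l) hl
  · simpa [Nat.sub_add_cancel hs] using hblock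
  · rw [Nat.succ_mul, show s - pnorm P + (l * pnorm P + pnorm P) = s + l * pnorm P by omega]
    exact h l (by omega)

theorem snoc (h : IsPowerAt P w s c)
    (hblock : parikh (w.extract (s + c * pnorm P) (s + c * pnorm P + pnorm P)) = P) :
    IsPowerAt P w s (c + 1) := fun l hl => by
  rcases Nat.lt_succ_iff_lt_or_eq.1 hl with hl | rfl
  exacts [h l hl, hblock]

end IsPowerAt

/-- `w[i..j]` has a periodic factorization whose `c` cores start at position `s` of `w`
(`w.extract x y` is `w[x..y-1]`). -/
structure HasPFAt (P : α → ℕ) (w : List α) (i j s c : ℕ) : Prop where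
  lt_length : j < w.length
  le_start : i ≤ s
  end_le : s + c * pnorm P ≤ j + 1
  head : PSSub (parikh (w.extract i s)) P
  power : IsPowerAt P w s c
  tail : PSSub (parikh (w.extract (s + c * pnorm P) (j + 1))) P

namespace HasPFAt

variable {P : α → ℕ} {w : List α} {i j s c : ℕ}

theorem start_lt (h : HasPFAt P w i j s c) : s < i + pnorm P := by
  have := (pssub_parikh_iff.1 h.head).2
  rw [List.length_extract] at this
  have := h.lt_length
  have := h.end_le
  omega

theorem lt_end (h : HasPFAt P w i j s c) : j + 1 < s + c * pnorm P + pnorm P := by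
  have := (pssub_parikh_iff.1 h.tail).2
  rw [List.length_extract] at this
  have := h.lt_length
  have := h.end_le
  omega

theorem start_eq (h : HasPFAt P w i j s c) {t : ℕ} (ht : t % pnorm P = s % pnorm P)
    (hit : i ≤ t) (hti : t < i + pnorm P) : s = t := by
  have := h.le_start
  have := h.start_lt
  exact (Nat.eq_of_mod_eq_of_lt_add ht (by omega) (by omega)).symm

theorem with_head (h : HasPFAt P w i j s c) {i' : ℕ} (hi' : i' ≤ s)
    (hhead : PSSub (parikh (w.extract i' s)) P) : HasPFAt P w i' j s c :=
  { h with le_start := hi', head := hhead }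

theorem with_tail (h : HasPFAt P w i j s c) {j' : ℕ} (hj'w : j' < w.length)
    (hj' : s + c * pnorm P ≤ j' + 1)
    (htail : PSSub (parikh (w.extract (s + c * pnorm P) (j' + 1))) P) :
    HasPFAt P w i j' s c :=
  { h with lt_length := hj'w, end_le := hj', tail := htail }

theorem exists_pred_of_parikh_eq (h : HasPFAt P w i j s c) (hs : pnorm P ≤ s)
    (hblock : parikh (w.extract (s - pnorm P) s) = P) :
    ∃ s' c', c ≤ c' ∧ s' % pnorm P = s % pnorm P ∧ HasPFAt P w (i - 1) j s' c' := by
  have := h.le_start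
  have := h.start_lt
  rcases Nat.lt_or_ge (s - pnorm P) (i - 1) with hlt | hge
  · refine ⟨s, c, le_rfl, rfl, h.with_head (by omega) ?_⟩
    refine pssub_parikh_of_infix_of_parikh_eq (List.extract_infix_extract w hlt.le le_rfl)
      hblock ?_
    rw [List.length_extract]
    omega
  -- `w[i - 1..s - 1]` is the whole block, which becomes a new core
  have hend : s - pnorm P + (c + 1) * pnorm P = s + c * pnorm P := by
    rw [Nat.succ_mul]; omega
  refine ⟨s - pnorm P, c + 1, by omega, ?_,
    ⟨h.lt_length, by omega, ?_, ?_, h.power.cons hs hblock, ?_⟩⟩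
  · rw [← Nat.add_mod_right (s - pnorm P), Nat.sub_add_cancel hs]
  · rw [hend]; exact h.end_le
  · refine pssub_parikh_of_infix ?_ h.head
    simp [List.extract_eq_take_drop, show s - pnorm P - (i - 1) = 0 by omega]
  · rw [hend]; exact h.tail

theorem exists_succ_of_parikh_eq (h : HasPFAt P w i j s c)
    (hw : s + c * pnorm P + pnorm P ≤ w.length)
    (hblock : parikh (w.extract (s + c * pnorm P) (s + c * pnorm P + pnorm P)) = P) :
    ∃ c', c ≤ c' ∧ HasPFAt P w i (j + 1) s c' := by
  have := h.end_le
  have := h.lt_end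
  rcases Nat.lt_or_ge (j + 2) (s + c * pnorm P + pnorm P) with hlt | hge
  · refine ⟨c, le_rfl, h.with_tail (by omega) (by omega) ?_⟩
    refine pssub_parikh_of_infix_of_parikh_eq (List.extract_infix_extract w le_rfl hlt.le)
      hblock ?_
    rw [List.length_extract]
    omega
  -- `w[s + c|P|..j + 1]` is the whole block, which becomes a new core
  have hend : s + (c + 1) * pnorm P = s + c * pnorm P + pnorm P := by
    rw [Nat.succ_mul, Nat.add_assoc]
  refine ⟨c + 1, by omega,
    ⟨by omega, h.le_start, by omega, h.head, h.power.snoc hblock, ?_⟩⟩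
  refine pssub_parikh_of_infix ?_ h.head
  simp [List.extract_eq_take_drop, show j + 1 + 1 - (s + (c + 1) * pnorm P) = 0 by omega]

theorem of_isPF {m : ℕ} {u : ℕ → List α} (hij : i ≤ j + 1) (hj : j < w.length)
    (h : IsPF P (frag w i j) m u) : HasPFAt P w i j (i + (u 0).length) (m - 1) := by
  obtain ⟨hm, hsplit, hcores, hhead, htail⟩ := h
  obtain ⟨c, rfl⟩ : ∃ c, m = c + 1 := ⟨m - 1, by omega⟩
  rw [Nat.add_sub_cancel]
  have hcore_len : ∀ l < c, (u (l + 1)).length = pnorm P := fun l hl => by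
    rw [← pnorm_parikh, hcores (l + 1) (by omega) (by omega)]
  have hM_len := List.length_flatten_map_range hcore_len
  change w.extract i (j + 1) = _ at hsplit
  rw [List.flatten_map_range_add_two, List.append_assoc] at hsplit
  have hlen := congrArg List.length hsplit
  simp only [List.length_extract, List.length_append, hM_len] at hlen
  obtain ⟨hu0, hrest⟩ := List.eq_extract_of_extract_eq_append w hij hj hsplit
  set s := i + (u 0).length
  obtain ⟨hM, hu⟩ := List.eq_extract_of_extract_eq_append w (by omega) hj hrest.symm
  rw [hM_len] at hM hu
  refine ⟨hj, by omega, by omega, hu0 ▸ hhead, fun l hl => ?_, hu ▸ htail⟩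
  have hlc : l * pnorm P + pnorm P ≤ c * pnorm P := by
    rw [← Nat.succ_mul]; exact Nat.mul_le_mul_right _ hl
  have hcore : u (l + 1) = w.extract (s + l * pnorm P) (s + l * pnorm P + pnorm P) := by
    rw [← List.extract_flatten_map_range hcore_len hl, hM, List.extract_extract w (by omega),
      Nat.add_assoc _ (l * pnorm P)]
  exact hcore ▸ hcores (l + 1) (by omega) (by omega)

theorem periodicAnch (h : HasPFAt P w i j s c) (hc : 2 ≤ c) {k : ℕ}
    (hs : s % pnorm P = k % pnorm P) : PeriodicAnch P w i j k := by
  have hlt := h.lt_length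
  have hle := h.end_le
  let u : ℕ → List α := fun
    | 0 => w.extract i s
    | l + 1 => if l < c then w.extract (s + l * pnorm P) (s + l * pnorm P + pnorm P)
        else w.extract (s + c * pnorm P) (j + 1)
  have hcores : ((List.range c).map fun l => u (l + 1)).flatten =
      w.extract s (s + c * pnorm P) := by
    rw [← List.flatten_map_range_extract]
    exact congrArg _ (List.map_congr_left fun l hl => if_pos (List.mem_range.1 hl))
  refine ⟨c + 1, u, by omega, ⟨by omega, ?_, ?_, h.head, ?_⟩, ?_⟩
  · change w.extract i (j + 1) = _
    rw [List.flatten_map_range_add_two, hcores]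
    simp only [u, lt_irrefl, if_false]
    rw [List.extract_append_extract w h.le_start (by omega),
      List.extract_append_extract w (by have := h.le_start; omega) hle]
  · rintro (_ | l) h0 hl
    · omega
    · simp only [u, if_pos (by omega : l < c)]
      exact h.power l (by omega)
  · simpa [u] using h.tail
  · simp only [u, List.length_extract]
    rwa [show i + (min s w.length - i) = s by have := h.le_start; omega]

end HasPFAt

theorem periodicAnch_iff_exists_hasPFAt {P : α → ℕ} {w : List α} {i j k : ℕ}
    (hij : i ≤ j + 1) (hj : j < w.length) : PeriodicAnch P w i j k ↔
      ∃ s c, 2 ≤ c ∧ s % pnorm P = k % pnorm P ∧ HasPFAt P w i j s c := by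
  refine ⟨fun ⟨m, u, hm, hpf, hk⟩ => ⟨_, m - 1, by omega, hk, .of_isPF hij hj hpf⟩, ?_⟩
  rintro ⟨s, c, hc, hs, h⟩
  exact h.periodicAnch hc hs

section Runs

variable {P : α → ℕ} {w : List α}

theorem maxPower_iff (hP : 0 < pnorm P) {i j : ℕ} :
    MaxPower P w i j ↔ j < w.length ∧
      (∃ m, 2 ≤ m ∧ j + 1 = i + m * pnorm P ∧ IsPowerAt P w i m) ∧
      (i < pnorm P ∨ parikh (w.extract (i - pnorm P) i) ≠ P) ∧
      (w.length ≤ j + pnorm P ∨ parikh (w.extract (j + 1) (j + 1 + pnorm P)) ≠ P) := by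
  have hfrag : ∀ x y, y + 1 = x + pnorm P → frag w x y = w.extract x (x + pnorm P) :=
    fun x y h => by rw [← h]; rfl
  have hblocks : ∀ m, j + 1 = i + m * pnorm P →
      ((∀ l, i + (l + 1) * pnorm P ≤ j + 1 →
        parikh (frag w (i + l * pnorm P) (i + (l + 1) * pnorm P - 1)) = P) ↔
        IsPowerAt P w i m) := fun m hjm => forall_congr' fun l => by
    rw [hjm, Nat.add_le_add_iff_left, Nat.mul_le_mul_right_iff hP, Nat.succ_le_iff,
      hfrag _ _ (by rw [Nat.succ_mul]; omega), Nat.add_assoc]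
  have hleft : (i < pnorm P ∨ parikh (frag w (i - pnorm P) (i - 1)) ≠ P) ↔
      (i < pnorm P ∨ parikh (w.extract (i - pnorm P) i) ≠ P) := or_congr_right' fun hi => by
    rw [hfrag _ _ (by omega), Nat.sub_add_cancel (not_lt.1 hi)]
  have hright : (w.length ≤ j + pnorm P ∨ parikh (frag w (j + 1) (j + pnorm P)) ≠ P) ↔
      (w.length ≤ j + pnorm P ∨ parikh (w.extract (j + 1) (j + 1 + pnorm P)) ≠ P) :=
    or_congr_right' fun _ => by rw [hfrag _ _ (by omega)]
  unfold MaxPower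
  rw [hleft, hright]
  constructor
  · rintro ⟨hj, ⟨m, hm, hjm⟩, hpow, hl, hr⟩
    exact ⟨hj, ⟨m, hm, hjm, (hblocks m hjm).1 hpow⟩, hl, hr⟩
  · rintro ⟨hj, ⟨m, hm, hjm, hpow⟩, hl, hr⟩
    exact ⟨hj, ⟨m, hm, hjm⟩, (hblocks m hjm).2 hpow, hl, hr⟩

theorem AnchoredRun.eq_of_hasPFAt {b e k s c b' e' : ℕ} (hrun : AnchoredRun P w b e k)
    (h : HasPFAt P w b e s c) (h' : HasPFAt P w b' e' s c) (hc : 2 ≤ c)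
    (hs : s % pnorm P = k % pnorm P) (hb' : b' ≤ b) (he' : e ≤ e') : b' = b ∧ e' = e := by
  obtain ⟨hbe, -, -, hleft, hright⟩ := hrun
  have := h.le_start
  have := h.end_le
  have := h'.lt_length
  constructor
  · by_contra hne
    refine hleft.resolve_left (by omega) ((h.with_head (by omega) ?_).periodicAnch hc hs)
    exact pssub_parikh_of_infix (List.extract_infix_extract w (by omega) le_rfl) h'.head
  · by_contra hne
    refine hright.resolve_left (by omega)
      ((h.with_tail (by omega) (by omega) ?_).periodicAnch hc hs)
    exact pssub_parikh_of_infix (List.extract_infix_extract w le_rfl (by omega)) h'.tail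

theorem HasPFAt.maxPower_of_anchoredRun (hP : 0 < pnorm P) {b e k s c : ℕ}
    (hrun : AnchoredRun P w b e k) (h : HasPFAt P w b e s c) (hc : 2 ≤ c)
    (hs : s % pnorm P = k % pnorm P) : MaxPower P w s (s + c * pnorm P - 1) := by
  obtain ⟨-, -, -, hleft, hright⟩ := hrun
  have := h.lt_length
  have := h.end_le
  have := h.start_lt
  have hcp : pnorm P ≤ c * pnorm P := Nat.le_mul_of_pos_left _ (by omega)
  refine (maxPower_iff hP).2 ⟨by omega, ⟨c, hc, by omega, h.power⟩, ?_, ?_⟩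
  · refine or_iff_not_imp_left.2 fun hsp hblock => ?_
    obtain ⟨s', c', hcc', hs', h'⟩ := h.exists_pred_of_parikh_eq (not_lt.1 hsp) hblock
    exact hleft.resolve_left (by omega) (h'.periodicAnch (by omega) (hs'.trans hs))
  · refine or_iff_not_imp_left.2 fun hw hblock => ?_
    rw [Nat.sub_add_cancel (by omega)] at hblock
    obtain ⟨c', hcc', h'⟩ := h.exists_succ_of_parikh_eq (by omega) hblock
    exact hright.resolve_left (by have := h'.lt_length; omega) (h'.periodicAnch (by omega) hs)

theorem AnchoredRun.existsUnique_maxPower (hP : 0 < pnorm P) {b e k : ℕ}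
    (hrun : AnchoredRun P w b e k) :
    ∃! ij : ℕ × ℕ, MaxPower P w ij.1 ij.2 ∧
      b ≤ ij.1 ∧ ij.2 ≤ e ∧ ij.1 - b < pnorm P ∧ e - ij.2 < pnorm P ∧
      ij.1 % pnorm P = k % pnorm P := by
  have ⟨hbe, hew, hpa, _⟩ := hrun
  obtain ⟨s, c, hc, hs, h⟩ := (periodicAnch_iff_exists_hasPFAt (by omega) hew).1 hpa
  have := h.le_start
  have := h.start_lt
  have := h.end_le
  have := h.lt_end
  have hcp : pnorm P ≤ c * pnorm P := Nat.le_mul_of_pos_left _ (by omega)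
  refine ⟨(s, s + c * pnorm P - 1),
    ⟨h.maxPower_of_anchoredRun hP hrun hc hs, by omega, by omega, by omega, by omega, hs⟩, ?_⟩
  rintro ⟨i, j⟩ ⟨hmp, hbi, hje, hib, hej, hi⟩
  dsimp only at hmp hbi hje hib hej hi
  obtain ⟨-, ⟨m, -, hjm, -⟩, -⟩ := (maxPower_iff hP).1 hmp
  obtain rfl : s = i := h.start_eq (hi.trans hs.symm) hbi (by omega)
  -- both `j + 1` and `s + c|P|` are `≡ s` and lie in `(e + 1 - |P|, e + 1]`
  have hj : j + 1 = s + c * pnorm P := Nat.eq_of_mod_eq_of_lt_add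
    (by rw [hjm, Nat.add_mul_mod_self_right, Nat.add_mul_mod_self_right]) (by omega) (by omega)
  rw [Prod.mk.injEq]
  exact ⟨rfl, by omega⟩

theorem exists_minimal_head (hP : 0 < pnorm P) (w : List α) (i : ℕ) :
    ∃ b ≤ i, PSSub (parikh (w.extract b i)) P ∧
      ∀ b', PSSub (parikh (w.extract b' i)) P → b ≤ b' := by
  classical
  have hi : PSSub (parikh (w.extract i i)) P := by
    simpa [List.extract_eq_take_drop] using pssub_parikh_nil hP
  have hex : ∃ b, PSSub (parikh (w.extract b i)) P := ⟨i, hi⟩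
  exact ⟨Nat.find hex, Nat.find_min' hex hi, Nat.find_spec hex, fun _ => Nat.find_min' hex⟩

theorem exists_maximal_tail (hP : 0 < pnorm P) {j : ℕ} (hj : j < w.length) :
    ∃ e, j ≤ e ∧ e < w.length ∧ PSSub (parikh (w.extract (j + 1) (e + 1))) P ∧
      ∀ e' < w.length, PSSub (parikh (w.extract (j + 1) (e' + 1))) P → e' ≤ e := by
  classical
  have hj' : PSSub (parikh (w.extract (j + 1) (j + 1))) P := by
    simpa [List.extract_eq_take_drop] using pssub_parikh_nil hP
  let Q e := PSSub (parikh (w.extract (j + 1) (e + 1))) P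
  have := Nat.findGreatest_le (P := Q) (w.length - 1)
  exact ⟨Nat.findGreatest Q (w.length - 1), Nat.le_findGreatest (by omega) hj', by omega,
    Nat.findGreatest_spec (P := Q) (by omega) hj',
    fun _ he' he'Q => Nat.le_findGreatest (by omega) he'Q⟩

namespace MaxPower

variable {i j : ℕ}

theorem start_eq (hP : 0 < pnorm P) (hmp : MaxPower P w i j) {b e s c : ℕ}
    (h : HasPFAt P w b e s c) (hc : 1 ≤ c) (hs : s % pnorm P = i % pnorm P) (hbi : b ≤ i)
    (hib : i ≤ b + pnorm P) : s = i := by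
  obtain ⟨-, -, hleft, -⟩ := (maxPower_iff hP).1 hmp
  rcases Nat.lt_or_ge i (b + pnorm P) with hlt | hge
  · exact h.start_eq hs.symm hbi hlt
  -- otherwise the first core of `h` would be a full block just before `w[i..j]`
  have hsb : s = b := h.start_eq (by rw [hs, show i = b + pnorm P by omega, Nat.add_mod_right])
    le_rfl (by omega)
  have hcore := h.power 0 hc
  rw [Nat.zero_mul, Nat.add_zero, hsb, show b = i - pnorm P by omega,
    Nat.sub_add_cancel (by omega)] at hcore
  exact absurd hcore (hleft.resolve_left (by omega))

theorem end_eq (hP : 0 < pnorm P) (hmp : MaxPower P w i j) {b e c : ℕ}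
    (h : HasPFAt P w b e i c) (hje : j ≤ e) : i + c * pnorm P = j + 1 := by
  obtain ⟨-, ⟨m, -, hjm, hpow⟩, -, hright⟩ := (maxPower_iff hP).1 hmp
  have := h.end_le
  have := h.lt_length
  rcases lt_trichotomy c m with hlt | rfl | hgt
  · have hcm : c * pnorm P + pnorm P ≤ m * pnorm P := by
      rw [← Nat.succ_mul]; exact Nat.mul_le_mul_right _ hlt
    exact absurd h.tail (not_pssub_parikh_of_infix_of_parikh_eq
      (List.extract_infix_extract w le_rfl (by omega)) (hpow c hlt))
  · exact hjm.symm
  · have hcm : m * pnorm P + pnorm P ≤ c * pnorm P := by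
      rw [← Nat.succ_mul]; exact Nat.mul_le_mul_right _ hgt
    have hcore := h.power m hgt
    rw [← hjm] at hcore
    exact absurd hcore (hright.resolve_left (by omega))

theorem anchoredRun (hP : 0 < pnorm P) (hmp : MaxPower P w i j) {b e c : ℕ}
    (h : HasPFAt P w b e i c) (hc : 2 ≤ c) (hje : j ≤ e)
    (hb : ∀ b', PSSub (parikh (w.extract b' i)) P → b ≤ b')
    (he : ∀ e' < w.length, PSSub (parikh (w.extract (j + 1) (e' + 1))) P → e' ≤ e) :
    AnchoredRun P w b e i := by
  have := h.le_start
  have := h.start_lt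
  have := h.end_le
  have := h.lt_length
  have : pnorm P ≤ c * pnorm P := Nat.le_mul_of_pos_left _ (by omega)
  refine ⟨by omega, h.lt_length, h.periodicAnch hc rfl, ?_, ?_⟩
  · refine or_iff_not_imp_left.2 fun hb0 hpa => ?_
    obtain ⟨s', c', hc', hs', h'⟩ :=
      (periodicAnch_iff_exists_hasPFAt (by omega) h.lt_length).1 hpa
    obtain rfl := hmp.start_eq hP h' (by omega) hs' (by omega) (by omega)
    have := hb _ h'.head
    omega
  · refine or_iff_not_imp_left.2 fun he1 hpa => ?_
    obtain ⟨s', c', hc', hs', h'⟩ :=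
      (periodicAnch_iff_exists_hasPFAt (by omega) (by omega)).1 hpa
    obtain rfl := hmp.start_eq hP h' (by omega) hs' (by omega) (by omega)
    have := he (e + 1) (by omega) (hmp.end_eq hP h' (by omega) ▸ h'.tail)
    omega

theorem existsUnique_anchoredRun (hP : 0 < pnorm P) (hmp : MaxPower P w i j) :
    ∃! be : ℕ × ℕ, AnchoredRun P w be.1 be.2 i ∧
      be.1 ≤ i ∧ j ≤ be.2 ∧ i - be.1 < pnorm P ∧ be.2 - j < pnorm P := by
  obtain ⟨hj, ⟨m, hm, hjm, hpow⟩, -⟩ := (maxPower_iff hP).1 hmp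
  obtain ⟨b, hbi, hhead, hb⟩ := exists_minimal_head hP w i
  obtain ⟨e, hje, hew, htail, he⟩ := exists_maximal_tail hP hj
  have h : HasPFAt P w b e i m := ⟨hew, hbi, by omega, hhead, hpow, hjm ▸ htail⟩
  have := h.start_lt
  have := h.lt_end
  refine ⟨(b, e), ⟨hmp.anchoredRun hP h hm hje hb he, hbi, hje, by omega, by omega⟩, ?_⟩
  rintro ⟨b', e'⟩ ⟨hrun', hb'i, hje', hib', hej'⟩
  dsimp only at hrun' hb'i hje' hib' hej'
  obtain ⟨s', c', hc', hs', h'⟩ :=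
    (periodicAnch_iff_exists_hasPFAt (by omega) hrun'.2.1).1 hrun'.2.2.1
  obtain rfl := hmp.start_eq hP h' (by omega) hs' hb'i (by omega)
  have hend := hmp.end_eq hP h' hje'
  obtain rfl : c' = m := Nat.eq_of_mul_eq_mul_right (by omega) (by omega)
  obtain ⟨rfl, rfl⟩ := hrun'.eq_of_hasPFAt h' h hc' hs' (hb _ h'.head)
    (he _ h'.lt_length (hend ▸ h'.tail))
  rfl

end MaxPower

end Runs

/-- The one-to-one correspondence between maximal abelian powers of period P and
anchored runs with period P: every maximal power extends to a unique anchored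
run (anchored at its starting position) by adding a head and tail of length < p,
and trimming the head and tail of an anchored run yields a unique maximal power. -/
theorem maxPower_anchoredRun_bijection (P : α → ℕ) (w : List α)
    (hP : 0 < pnorm P) :
    (∀ i j, MaxPower P w i j →
      ∃! be : ℕ × ℕ, AnchoredRun P w be.1 be.2 i ∧
        be.1 ≤ i ∧ j ≤ be.2 ∧ i - be.1 < pnorm P ∧ be.2 - j < pnorm P) ∧
    (∀ b e k, AnchoredRun P w b e k →
      ∃! ij : ℕ × ℕ, MaxPower P w ij.1 ij.2 ∧
        b ≤ ij.1 ∧ ij.2 ≤ e ∧ ij.1 - b < pnorm P ∧ e - ij.2 < pnorm P ∧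
        ij.1 % pnorm P = k % pnorm P) :=
  ⟨fun _ _ hmp => hmp.existsUnique_anchoredRun hP,
    fun _ _ _ hrun => hrun.existsUnique_maxPower hP⟩
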